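/- For every integer n ≥ 6, there is no element v of the standard family Fₙ such that the number of elements w of Fₙ with δ(v, w) = 1 equals n − 1; indeed, this count equals n when v = 0 and is at most 4 for every other v ∈ Fₙ, where δ(v,w) := min(d(v,w), n − d(v,w)) and d is the Hamming distance. -/

import Mathlib

/-!
Every vector of `stdFamily n` is the indicator of an interval `[i, j)` of labels with
`1 ≤ i ≤ j ≤ n` (empty when `i = j`), so Hamming distances inside the family are
`|I| + |J| - 2 |I ∩ J|`, a function of the endpoints. Now `δ(v, w) = 1` means `d(v, w) = 1`
(move one endpoint of `v` by one) or `d(v, w) = n - 1`, and as label `n` lies in no interval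
the latter makes `w` the complement of `v` in `[1, n)`. For `v = 0` this gives the `n - 1`
singletons and `[1, n)`; for `v ≠ 0` it leaves at most four candidates, fewer than `n - 1` once
`n ≥ 6`.
-/

/-- Indicator vector of the set of labels {i, i+1, …, j−1}, coordinates labelled 1,…,n. -/
def stdVec (n i j : ℕ) : Fin n → ZMod 2 :=
  fun k => if i ≤ k.val + 1 ∧ k.val + 1 < j then 1 else 0

/-- δ(v,w) = min(d(v,w), n − d(v,w)), where d is the Hamming distance. -/
def hdelta {n : ℕ} (v w : Fin n → ZMod 2) : ℕ :=
  min (hammingDist v w) (n - hammingDist v w)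

/-- The standard family Fₙ: the zero vector together with the vectors v_{i,j}
for 1 ≤ i < j ≤ n. -/
def stdFamily (n : ℕ) : Finset (Fin n → ZMod 2) :=
  insert 0 ((((Finset.Icc 1 n) ×ˢ (Finset.Icc 1 n)).filter fun p => p.1 < p.2).image
    fun p => stdVec n p.1 p.2)

open Finset

lemma stdVec_apply_ne_iff {n : ℕ} (a b i j : ℕ) (k : Fin n) :
    stdVec n a b k ≠ stdVec n i j k ↔ ¬(k.val + 1 ∈ Ico a b ↔ k.val + 1 ∈ Ico i j) := by
  simp only [stdVec, mem_Ico]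
  split_ifs <;> simp <;> tauto

lemma stdVec_eq_zero_of_le {n i j : ℕ} (h : j ≤ i) : stdVec n i j = 0 := by
  funext k
  simp only [stdVec, Pi.zero_apply, ite_eq_right_iff, and_imp]
  omega

lemma hammingDist_stdVec {n a b i j : ℕ} (ha : 1 ≤ a) (hb : b ≤ n + 1) (hi : 1 ≤ i)
    (hj : j ≤ n + 1) :
    hammingDist (stdVec n a b) (stdVec n i j) = (b - a) + (j - i) - 2 * (min b j - max a i) := by
  have hcard : hammingDist (stdVec n a b) (stdVec n i j) =
      #((Ico a b ∪ Ico i j) \ (Ico a b ∩ Ico i j)) := by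
    refine card_bij' (fun k _ => k.val + 1) (fun m hm => ⟨m - 1, ?_⟩) ?_ ?_ ?_ ?_
    · simp only [mem_sdiff, mem_union, mem_inter, mem_Ico] at hm
      omega
    · intro k hk
      simp only [mem_filter, mem_univ, true_and, stdVec_apply_ne_iff] at hk
      simp only [mem_sdiff, mem_union, mem_inter]
      tauto
    · intro m hm
      simp only [mem_sdiff, mem_union, mem_inter, mem_Ico] at hm
      simp only [mem_filter, mem_univ, true_and, stdVec_apply_ne_iff, mem_Ico]
      omega
    · intro k _
      simp
    · intro m hm
      simp only [mem_sdiff, mem_union, mem_inter, mem_Ico] at hm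
      dsimp only
      omega
  have hunion := card_union_add_card_inter (Ico a b) (Ico i j)
  rw [hcard, card_sdiff_of_subset inter_subset_union]
  rw [Ico_inter_Ico] at hunion ⊢
  simp only [Nat.card_Ico] at hunion ⊢
  omega

lemma stdVec_inj {n a b i j : ℕ} (ha : 1 ≤ a) (hab : a < b) (hb : b ≤ n + 1) (hi : 1 ≤ i)
    (hij : i < j) (hj : j ≤ n + 1) : stdVec n a b = stdVec n i j ↔ a = i ∧ b = j := by
  refine ⟨fun h => ?_, by rintro ⟨rfl, rfl⟩; rfl⟩
  have h0 := hammingDist_stdVec (n := n) ha hb hi hj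
  rw [h, hammingDist_self] at h0
  omega

lemma mem_stdFamily {n : ℕ} (hn : 1 ≤ n) {w : Fin n → ZMod 2} :
    w ∈ stdFamily n ↔ ∃ i j, 1 ≤ i ∧ i ≤ j ∧ j ≤ n ∧ stdVec n i j = w := by
  simp only [stdFamily, mem_insert, mem_image, mem_filter, mem_product, mem_Icc, Prod.exists]
  constructor
  · rintro (rfl | ⟨i, j, ⟨⟨⟨hi, -⟩, -, hj⟩, hij⟩, rfl⟩)
    · exact ⟨1, 1, le_rfl, le_rfl, hn, stdVec_eq_zero_of_le le_rfl⟩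
    · exact ⟨i, j, hi, hij.le, hj, rfl⟩
  · rintro ⟨i, j, hi, hij, hj, rfl⟩
    rcases hij.eq_or_lt with rfl | hij
    · exact Or.inl (stdVec_eq_zero_of_le le_rfl)
    · exact Or.inr ⟨i, j, ⟨⟨⟨hi, by omega⟩, by omega, hj⟩, hij⟩, rfl⟩

lemma hdelta_zero_stdVec {n i j : ℕ} (hi : 1 ≤ i) (hj : j ≤ n + 1) :
    hdelta 0 (stdVec n i j) = min (j - i) (n - (j - i)) := by
  rw [hdelta, ← stdVec_eq_zero_of_le (n := n) (le_refl 1),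
    hammingDist_stdVec le_rfl (by omega) hi hj]
  omega

lemma filter_hdelta_zero_eq {n : ℕ} (hn : 3 ≤ n) :
    {w ∈ stdFamily n | hdelta 0 w = 1} =
      insert (stdVec n 1 n) ((Ico 1 n).image fun i => stdVec n i (i + 1)) := by
  ext w
  simp only [mem_filter, mem_stdFamily (by omega : 1 ≤ n), mem_insert, mem_image, mem_Ico]
  constructor
  · rintro ⟨⟨i, j, hi, hij, hj, rfl⟩, hδ⟩
    rw [hdelta_zero_stdVec hi (by omega)] at hδ
    have : (i = 1 ∧ j = n) ∨ (i < n ∧ j = i + 1) := by omega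
    rcases this with ⟨rfl, rfl⟩ | ⟨hin, rfl⟩
    · exact Or.inl rfl
    · exact Or.inr ⟨i, ⟨hi, hin⟩, rfl⟩
  · rintro (rfl | ⟨i, ⟨hi, hin⟩, rfl⟩)
    · refine ⟨⟨1, n, le_rfl, by omega, le_rfl, rfl⟩, ?_⟩
      rw [hdelta_zero_stdVec le_rfl (by omega)]
      omega
    · refine ⟨⟨i, i + 1, hi, by omega, by omega, rfl⟩, ?_⟩
      rw [hdelta_zero_stdVec hi (by omega)]
      omega

lemma card_filter_hdelta_zero {n : ℕ} (hn : 3 ≤ n) :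
    #{w ∈ stdFamily n | hdelta 0 w = 1} = n := by
  have hinj : Set.InjOn (fun i => stdVec n i (i + 1)) (Ico 1 n) := by
    intro i hi i' hi' h
    simp only [coe_Ico, Set.mem_Ico] at hi hi'
    exact ((stdVec_inj hi.1 (by omega) (by omega) hi'.1 (by omega) (by omega)).mp h).1
  have hnot : stdVec n 1 n ∉ (Ico 1 n).image fun i => stdVec n i (i + 1) := by
    simp only [mem_image, mem_Ico, not_exists, not_and]
    intro i ⟨hi, hin⟩ h
    have := (stdVec_inj hi (by omega) (by omega) le_rfl (by omega) (by omega)).mp h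
    omega
  rw [filter_hdelta_zero_eq hn, card_insert_of_notMem hnot, card_image_of_injOn hinj,
    Nat.card_Ico]
  omega

lemma hammingDist_stdVec_eq_one {n a b i j : ℕ} (ha : 1 ≤ a) (hab : a < b) (hb : b ≤ n + 1)
    (hi : 1 ≤ i) (hij : i ≤ j) (hj : j ≤ n + 1)
    (h : hammingDist (stdVec n a b) (stdVec n i j) = 1) :
    (i = a + 1 ∧ j = b) ∨ (i = a ∧ j + 1 = b) ∨ (i + 1 = a ∧ j = b) ∨ (i = a ∧ j = b + 1) ∨
      (i = j ∧ a + 1 = b) := by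
  rw [hammingDist_stdVec ha hb hi hj] at h
  omega

lemma hammingDist_stdVec_eq_sub_one {n a b i j : ℕ} (ha : 1 ≤ a) (hab : a < b) (hb : b ≤ n)
    (hi : 1 ≤ i) (hij : i ≤ j) (hj : j ≤ n)
    (h : hammingDist (stdVec n a b) (stdVec n i j) = n - 1) :
    (a = 1 ∧ i = b ∧ j = n) ∨ (b = n ∧ i = 1 ∧ j = a) ∨ (a = 1 ∧ b = n ∧ i = j) := by
  rw [hammingDist_stdVec ha (by omega) hi (by omega)] at h
  omega

lemma card_filter_hdelta_stdVec_le_four {n a b : ℕ} (ha : 1 ≤ a) (hab : a < b) (hb : b ≤ n) :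
    #{w ∈ stdFamily n | hdelta (stdVec n a b) w = 1} ≤ 4 := by
  -- `[a, b)` with one endpoint moved by one, where moving `a` below `1` or `b` beyond `n` is
  -- replaced by taking the complement in `[1, n)`.
  refine (card_le_card fun w hw => ?_).trans (card_le_four (a := stdVec n (a + 1) b)
    (b := stdVec n a (b - 1)) (c := if a = 1 then stdVec n b n else stdVec n (a - 1) b)
    (d := if b = n then stdVec n 1 a else stdVec n a (b + 1)))
  obtain ⟨hw, hδ⟩ := mem_filter.mp hw
  obtain ⟨i, j, hi, hij, hj, rfl⟩ := (mem_stdFamily (by omega)).mp hw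
  have hempty : stdVec n i i = 0 := stdVec_eq_zero_of_le le_rfl
  simp only [mem_insert, mem_singleton]
  rw [hdelta] at hδ
  rcases (by omega : hammingDist (stdVec n a b) (stdVec n i j) = 1 ∨
      hammingDist (stdVec n a b) (stdVec n i j) = n - 1) with hd | hd
  · rcases hammingDist_stdVec_eq_one ha hab (by omega) hi hij (by omega) hd with
      ⟨rfl, rfl⟩ | ⟨rfl, rfl⟩ | ⟨rfl, rfl⟩ | ⟨rfl, rfl⟩ | ⟨rfl, rfl⟩
    · exact Or.inl rfl
    · exact Or.inr (Or.inl rfl)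
    · exact Or.inr (Or.inr (Or.inl (by rw [if_neg (by omega), Nat.add_sub_cancel])))
    · exact Or.inr (Or.inr (Or.inr (by rw [if_neg (by omega)])))
    · exact Or.inl (by rw [hempty, stdVec_eq_zero_of_le le_rfl])
  · rcases hammingDist_stdVec_eq_sub_one ha hab hb hi hij hj hd with
      ⟨rfl, rfl, rfl⟩ | ⟨rfl, rfl, rfl⟩ | ⟨rfl, rfl, rfl⟩
    · exact Or.inr (Or.inr (Or.inl (if_pos rfl).symm))
    · exact Or.inr (Or.inr (Or.inr (if_pos rfl).symm))
    · exact Or.inr (Or.inr (Or.inl (by rw [if_pos rfl, hempty, stdVec_eq_zero_of_le le_rfl])))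

lemma card_filter_hdelta_le_four {n : ℕ} {v : Fin n → ZMod 2} (hv : v ∈ stdFamily n)
    (hv0 : v ≠ 0) : #{w ∈ stdFamily n | hdelta v w = 1} ≤ 4 := by
  have hn : 1 ≤ n := Nat.pos_of_ne_zero fun h => hv0 (by subst h; exact Subsingleton.elim _ _)
  obtain ⟨a, b, ha, hab, hb, rfl⟩ := (mem_stdFamily hn).mp hv
  have hab : a < b := by
    by_contra hba
    exact hv0 (stdVec_eq_zero_of_le (by omega))
  exact card_filter_hdelta_stdVec_le_four ha hab hb

theorem stmt_13 (n : ℕ) (hn : 6 ≤ n) :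
    (¬ ∃ v ∈ stdFamily n,
        ((stdFamily n).filter fun w => hdelta v w = 1).card = n - 1) ∧
    ((stdFamily n).filter fun w => hdelta (0 : Fin n → ZMod 2) w = 1).card = n ∧
    (∀ v ∈ stdFamily n, v ≠ 0 →
        ((stdFamily n).filter fun w => hdelta v w = 1).card ≤ 4) := by
  have hzero := card_filter_hdelta_zero (n := n) (by omega)
  refine ⟨?_, hzero, fun v hv hv0 => card_filter_hdelta_le_four hv hv0⟩
  rintro ⟨v, hv, hcard⟩
  by_cases hv0 : v = 0
  · subst hv0
    omega
  · have := card_filter_hdelta_le_four hv hv0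
    omega
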